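/- arXiv:2511.03360 — 2 statements merged into one kernel-verified Lean document; each statement's English description precedes it below -/
import Mathlib

section
/- Let u be a smooth divergence-free field on 𝕋^d with ‖u(t,·)‖_{L²} ≤ K for all t ≥ 0, and let ρ be a bounded smooth solution of ∂ₜρ + div(uρ) = 0 with zero-average initial datum ρ̄. Then ‖ρ(t,·)‖_{Ḣ^{-1}} ≥ ‖ρ̄‖_{Ḣ^{-1}} − K‖ρ̄‖_{L^∞} · t for all t ≥ 0. -/
open MeasureTheory

/-- The fundamental domain `[0,1)^d` of the torus `𝕋^d`. -/
def unitCube (d : ℕ) : Set (Fin d → ℝ) := Set.univ.pi fun _ => Set.Ico (0:ℝ) 1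

section
open MeasureTheory Set
namespace MixAux


lemma restrict_unitCube (d : ℕ) :
    (volume : Measure (Fin d → ℝ)).restrict (unitCube d)
      = volume.restrict (Set.Icc 0 1) := by
  refine Measure.restrict_congr_set ?_
  have h := MeasureTheory.Measure.univ_pi_Ico_ae_eq_Icc
    (μ := fun _ : Fin d => (volume : Measure ℝ)) (f := fun _ => (0:ℝ)) (g := fun _ => 1)
  rw [show (volume : Measure (Fin d → ℝ)) = Measure.pi fun _ => volume from rfl]
  exact h

lemma volume_Icc_cube (d : ℕ) : (volume (Set.Icc (0 : Fin d → ℝ) 1)) = 1 := by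
  rw [Real.volume_Icc_pi]
  simp

lemma fderiv_shift {E F : Type*} [NormedAddCommGroup E] [NormedSpace ℝ E]
    [NormedAddCommGroup F] [NormedSpace ℝ F]
    {f : E → F} (hf : Differentiable ℝ f) (c : E) (hper : ∀ x, f (x + c) = f x) (x : E) :
    fderiv ℝ f (x + c) = fderiv ℝ f x := by
  have h1 : HasFDerivAt (fun y : E => y + c) (ContinuousLinearMap.id ℝ E) x :=
    (hasFDerivAt_id x).add_const c
  have h2 : HasFDerivAt (fun y => f (y + c))
      ((fderiv ℝ f (x + c)).comp (ContinuousLinearMap.id ℝ E)) x :=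
    (hf (x + c)).hasFDerivAt.comp x h1
  have h3 : (fun y => f (y + c)) = f := funext hper
  rw [h3] at h2
  simpa using h2.fderiv.symm

/-- Integral of a divergence of a smooth periodic vector field over the unit cube vanishes. -/
lemma integral_div_eq_zero {n : ℕ} (F : Fin (n+1) → (Fin (n+1) → ℝ) → ℝ)
    (hF : ∀ i, ContDiff ℝ (⊤ : ℕ∞) (F i))
    (hper : ∀ i j (x : Fin (n+1) → ℝ),
      F i (x + fun k => ((Pi.single j 1 : Fin (n+1) → ℤ) k : ℝ)) = F i x) :
    ∫ x in Set.Icc (0 : Fin (n+1) → ℝ) 1, ∑ i, fderiv ℝ (F i) x (Pi.single i 1) = 0 := by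
  have hle : (0 : Fin (n+1) → ℝ) ≤ 1 := fun i => zero_le_one
  have hint : IntegrableOn (fun x => ∑ i, fderiv ℝ (F i) x (Pi.single i 1))
      (Set.Icc (0 : Fin (n+1) → ℝ) 1) := by
    refine (Continuous.continuousOn ?_).integrableOn_compact isCompact_Icc
    exact continuous_finset_sum _ fun i _ =>
      (((hF i).fderiv_right (m := (⊤ : ℕ∞)) (by simp)).continuous).clm_apply continuous_const
  have key := integral_divergence_of_hasFDerivAt_off_countable'
      (a := (0 : Fin (n+1) → ℝ)) (b := 1) hle
      (f := fun i x => F i x) (f' := fun i x => fderiv ℝ (F i) x) ∅ Set.countable_empty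
      (fun i => (hF i).continuous.continuousOn)
      (fun x _ i => ((hF i).differentiable (by simp) x).hasFDerivAt) hint
  rw [key]
  refine Finset.sum_eq_zero fun i _ => ?_
  rw [sub_eq_zero]
  refine setIntegral_congr_fun measurableSet_Icc fun x _ => ?_
  have hx : Fin.insertNth i ((1 : Fin (n+1) → ℝ) i) x
      = Fin.insertNth i ((0 : Fin (n+1) → ℝ) i) x
        + fun k => ((Pi.single i 1 : Fin (n+1) → ℤ) k : ℝ) := by
    funext k
    refine Fin.succAboveCases i ?_ ?_ k
    · simp
    · intro j
      simp [Fin.succAbove_ne i j, Pi.single_eq_of_ne (Fin.succAbove_ne i j)]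
  rw [hx]
  exact hper i i _

end MixAux

end
section
open MeasureTheory Set
namespace MixAux

/-- Differentiation under the integral sign over the closed unit cube. -/
lemma hasDerivAt_setIntegral_cube {d : ℕ} (G G' : ℝ → (Fin d → ℝ) → ℝ)
    (hG : Continuous fun p : ℝ × (Fin d → ℝ) => G p.1 p.2)
    (hG' : Continuous fun p : ℝ × (Fin d → ℝ) => G' p.1 p.2)
    (hderiv : ∀ (x : Fin d → ℝ) (s : ℝ), HasDerivAt (fun r => G r x) (G' s x) s) (t : ℝ) :
    HasDerivAt (fun s => ∫ x in Set.Icc (0 : Fin d → ℝ) 1, G s x)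
      (∫ x in Set.Icc (0 : Fin d → ℝ) 1, G' t x) t := by
  set μ := volume.restrict (Set.Icc (0 : Fin d → ℝ) 1) with hμ
  have hGs : ∀ s : ℝ, Continuous fun x => G s x :=
    fun s => hG.comp (continuous_const.prodMk continuous_id)
  have hG's : ∀ s : ℝ, Continuous fun x => G' s x :=
    fun s => hG'.comp (continuous_const.prodMk continuous_id)
  obtain ⟨C, hC⟩ := (IsCompact.exists_bound_of_continuousOn
    ((isCompact_Icc (a := t - 1) (b := t + 1)).prod (isCompact_Icc
      (a := (0 : Fin d → ℝ)) (b := 1))) hG'.continuousOn)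
  have main := hasDerivAt_integral_of_dominated_loc_of_deriv_le (μ := μ)
    (F := fun s x => G s x) (F' := fun s x => G' s x) (x₀ := t)
    (bound := fun _ => C) (Metric.ball_mem_nhds t one_pos)
    (Filter.Eventually.of_forall fun s => ((hGs s).aestronglyMeasurable))
    (((hGs t).continuousOn.integrableOn_compact isCompact_Icc))
    ((hG's t).aestronglyMeasurable)
    ?_ ?_ ?_
  · exact main.2
  · refine (ae_restrict_mem measurableSet_Icc).mono fun x hx => ?_
    intro s hs
    have hs' : s ∈ Set.Icc (t - 1) (t + 1) := by
      have := Metric.mem_ball.mp hs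
      rw [Real.dist_eq] at this
      constructor <;> [linarith [abs_lt.mp this]; linarith [abs_lt.mp this]]
    exact hC (s, x) ⟨hs', hx⟩
  · exact (integrableOn_const isCompact_Icc.measure_lt_top.ne)
  · exact Filter.Eventually.of_forall fun x s _ => hderiv x s

section curried
variable {d : ℕ} {E : Type*} [NormedAddCommGroup E] [NormedSpace ℝ E]

/-- slice smoothness -/
lemma curry_contDiff {Φ : ℝ × (Fin d → ℝ) → E} (hΦ : ContDiff ℝ (⊤ : ℕ∞) Φ) (t : ℝ) :
    ContDiff ℝ (⊤ : ℕ∞) (fun x => Φ (t, x)) :=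
  hΦ.comp (contDiff_const.prodMk contDiff_id)

/-- time derivative of a slice -/
lemma hasDerivAt_slice {Φ : ℝ × (Fin d → ℝ) → E} (hΦ : ContDiff ℝ (⊤ : ℕ∞) Φ) (t : ℝ)
    (x : Fin d → ℝ) :
    HasDerivAt (fun s => Φ (s, x)) (fderiv ℝ Φ (t, x) (1, 0)) t :=
  (hΦ.differentiable (by simp) (t, x)).hasFDerivAt.comp_hasDerivAt t
    ((hasDerivAt_id t).prodMk (hasDerivAt_const t x))

lemma hasFDerivAt_curry {Φ : ℝ × (Fin d → ℝ) → E} (hΦ : ContDiff ℝ (⊤ : ℕ∞) Φ) (t : ℝ)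
    (x : Fin d → ℝ) :
    HasFDerivAt (fun y => Φ (t, y))
      ((fderiv ℝ Φ (t, x)).comp (((0 : (Fin d → ℝ) →L[ℝ] ℝ)).prod
        (ContinuousLinearMap.id ℝ (Fin d → ℝ)))) x :=
  (hΦ.differentiable (by simp) (t, x)).hasFDerivAt.comp x
    ((hasFDerivAt_const t x).prodMk (hasFDerivAt_id x))

lemma fderiv_curry_eq {Φ : ℝ × (Fin d → ℝ) → E} (hΦ : ContDiff ℝ (⊤ : ℕ∞) Φ) (t : ℝ)
    (x v : Fin d → ℝ) :
    fderiv ℝ (fun y => Φ (t, y)) x v = fderiv ℝ Φ (t, x) (0, v) := by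
  rw [(hasFDerivAt_curry hΦ t x).fderiv]
  rfl

lemma cont_fderiv_curry {Φ : ℝ × (Fin d → ℝ) → ℝ} (hΦ : ContDiff ℝ (⊤ : ℕ∞) Φ) (v : Fin d → ℝ) :
    Continuous fun p : ℝ × (Fin d → ℝ) => fderiv ℝ (fun y => Φ (p.1, y)) p.2 v := by
  have h : (fun p : ℝ × (Fin d → ℝ) => fderiv ℝ (fun y => Φ (p.1, y)) p.2 v)
      = fun p => fderiv ℝ Φ p ((0 : ℝ), v) := by
    funext p
    rw [fderiv_curry_eq hΦ p.1 p.2 v]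
  rw [h]
  exact ((hΦ.fderiv_right (m := (⊤ : ℕ∞)) (by simp)).continuous).clm_apply continuous_const

/-- Clairaut / symmetry of mixed partials, packaged. -/
lemma clairaut {Φ : ℝ × (Fin d → ℝ) → ℝ} (hΦ : ContDiff ℝ (⊤ : ℕ∞) Φ) (t : ℝ)
    (x v : Fin d → ℝ) :
    HasDerivAt (fun s => fderiv ℝ (fun y => Φ (s, y)) x v)
      (fderiv ℝ (fun y => fderiv ℝ Φ (t, y) (1, 0)) x v) t := by
  set Φ' := fderiv ℝ Φ with hΦ'def
  have hΦ' : ContDiff ℝ (⊤ : ℕ∞) Φ' := hΦ.fderiv_right (m := (⊤ : ℕ∞)) (by simp)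
  have e1 : (fun s => fderiv ℝ (fun y => Φ (s, y)) x v) = fun s => Φ' (s, x) ((0:ℝ), v) :=
    funext fun s => fderiv_curry_eq hΦ s x v
  -- derivative of s ↦ Φ' (s,x) applied to (0,v)
  have h2 : HasDerivAt (fun s => Φ' (s, x)) (fderiv ℝ Φ' (t, x) (1, 0)) t :=
    hasDerivAt_slice hΦ' t x
  have h3 : HasDerivAt (fun s => Φ' (s, x) ((0:ℝ), v))
      ((fderiv ℝ Φ' (t, x) (1, 0)) ((0:ℝ), v)) t := by
    have := h2.clm_apply (hasDerivAt_const t ((0:ℝ), v))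
    simpa using this
  -- symmetry of the second derivative
  have hsymm : (fderiv ℝ Φ' (t, x) (1, 0)) ((0:ℝ), v)
      = (fderiv ℝ Φ' (t, x) ((0:ℝ), v)) (1, 0) :=
    second_derivative_symmetric (f := Φ) (f' := Φ') (f'' := fderiv ℝ Φ' (t, x))
      (fun y => (hΦ.differentiable (by simp) y).hasFDerivAt)
      ((hΦ'.differentiable (by simp) (t, x)).hasFDerivAt) _ _
  -- identify the RHS
  have e4 : fderiv ℝ (fun y => Φ' (t, y) (1, 0)) x v
      = (fderiv ℝ Φ' (t, x) ((0:ℝ), v)) (1, 0) := by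
    set A : ((ℝ × (Fin d → ℝ)) →L[ℝ] ℝ) →L[ℝ] ℝ :=
      ContinuousLinearMap.apply ℝ ℝ ((1:ℝ), (0 : Fin d → ℝ))
    have hΨ : ContDiff ℝ (⊤ : ℕ∞) (fun p : ℝ × (Fin d → ℝ) => Φ' p ((1:ℝ), (0 : Fin d → ℝ))) :=
      hΦ'.clm_apply contDiff_const
    have := fderiv_curry_eq (Φ := fun p : ℝ × (Fin d → ℝ) => Φ' p ((1:ℝ), (0 : Fin d → ℝ)))
      hΨ t x v
    rw [this]
    -- fderiv of p ↦ Φ' p (1,0) is (fderiv Φ' p) evaluated suitably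
    have h5 : HasFDerivAt (fun p : ℝ × (Fin d → ℝ) => Φ' p ((1:ℝ), (0 : Fin d → ℝ)))
        (A.comp (fderiv ℝ Φ' (t, x))) (t, x) :=
      A.hasFDerivAt.comp _ ((hΦ'.differentiable (by simp) (t, x)).hasFDerivAt)
    rw [h5.fderiv]
    rfl
  rw [e1, e4, ← hsymm]
  exact h3

end curried
end MixAux
end
section
open MeasureTheory Set
namespace MixAux

/-- If all even moments of `f` on the cube are `≤ R^(2m)`, then `|f| ≤ R` a.e. -/
lemma ae_abs_le_of_moments {d : ℕ} (R : ℝ) (hR : 0 ≤ R) (f : (Fin d → ℝ) → ℝ)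
    (hf : Continuous f)
    (hpow : ∀ m : ℕ, ∫ x in Set.Icc (0 : Fin d → ℝ) 1, (f x) ^ (2 * m) ≤ R ^ (2 * m)) :
    ∀ᵐ x ∂(volume.restrict (Set.Icc (0 : Fin d → ℝ) 1)), |f x| ≤ R := by
  set Q : Set (Fin d → ℝ) := Set.Icc 0 1 with hQ
  have hQm : MeasurableSet Q := measurableSet_Icc
  -- the "bad" sets
  set A : ℕ → Set (Fin d → ℝ) := fun k => {x ∈ Q | R + 1 / (k + 1) ≤ |f x|} with hA
  have hAm : ∀ k, MeasurableSet (A k) := by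
    intro k
    exact hQm.inter ((isClosed_le continuous_const hf.abs).measurableSet)
  have hAnull : ∀ k, volume (A k) = 0 := by
    intro k
    set ε : ℝ := 1 / (k + 1) with hε
    have hε0 : 0 < ε := by positivity
    -- each moment bounds the measure
    have key : ∀ m : ℕ, (R + ε) ^ (2 * m) * (volume (A k)).toReal ≤ R ^ (2 * m) := by
      intro m
      have hsub : A k ⊆ Q := fun x hx => hx.1
      have hintQ : IntegrableOn (fun x => (f x) ^ (2 * m)) Q :=
        ((hf.pow _).continuousOn).integrableOn_compact isCompact_Icc
      have hintA : IntegrableOn (fun x => (f x) ^ (2 * m)) (A k) := hintQ.mono_set hsub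
      have h1 : ∫ x in A k, ((R + ε) ^ (2 * m)) ≤ ∫ x in A k, (f x) ^ (2 * m) := by
        refine setIntegral_mono_on (integrableOn_const (ne_of_lt ?_)) hintA (hAm k) ?_
        · exact lt_of_le_of_lt (measure_mono hsub) isCompact_Icc.measure_lt_top
        · intro x hx
          have h2 : (R + ε) ^ (2 * m) ≤ |f x| ^ (2 * m) :=
            pow_le_pow_left₀ (by positivity) hx.2 _
          calc (R + ε) ^ (2 * m) ≤ |f x| ^ (2 * m) := h2
            _ = (f x) ^ (2 * m) := (Even.pow_abs (by exact ⟨m, by ring⟩) _)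
      have h3 : ∫ x in A k, (f x) ^ (2 * m) ≤ ∫ x in Q, (f x) ^ (2 * m) := by
        refine setIntegral_mono_set hintQ ?_ (HasSubset.Subset.eventuallyLE hsub)
        exact Filter.Eventually.of_forall fun x => Even.pow_nonneg (even_two_mul m) _
      have h4 : ∫ x in A k, ((R + ε) ^ (2 * m)) = (volume (A k)).toReal * (R + ε) ^ (2 * m) := by
        rw [setIntegral_const, smul_eq_mul]; rfl
      nlinarith [hpow m, (volume (A k)).toReal, h1, h3, h4]
    -- conclude the measure is zero
    have hfin : volume (A k) < ⊤ :=
      lt_of_le_of_lt (measure_mono fun x hx => hx.1) isCompact_Icc.measure_lt_top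
    have htom : (volume (A k)).toReal ≤ 0 := by
      by_contra hcon
      push_neg at hcon
      have hRlt : R < R + ε := by linarith
      -- (R+ε)^(2m) μ ≤ R^(2m) for all m forces μ ≤ (R/(R+ε))^(2m)
      set r : ℝ := R / (R + ε) with hr
      have hr0 : 0 ≤ r := by positivity
      have hr1 : r < 1 := by
        rw [hr, div_lt_one (by positivity)]
        exact hRlt
      have hle : ∀ m : ℕ, (volume (A k)).toReal ≤ r ^ m := by
        intro m
        have h5 := key m
        have h6 : (0:ℝ) < (R + ε) ^ (2 * m) := by positivity
        have h7 : (volume (A k)).toReal ≤ R ^ (2 * m) / (R + ε) ^ (2 * m) := by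
          rw [le_div_iff₀ h6]; linarith [h5]
        have h8 : R ^ (2 * m) / (R + ε) ^ (2 * m) = r ^ (2 * m) := by
          rw [hr, div_pow]
        refine (h7.trans_eq h8).trans ?_
        exact pow_le_pow_of_le_one hr0 hr1.le (Nat.le_mul_of_pos_left m two_pos)
      have htend : Filter.Tendsto (fun m : ℕ => r ^ m) Filter.atTop (nhds 0) :=
        tendsto_pow_atTop_nhds_zero_of_lt_one hr0 hr1
      have hfinal : (volume (A k)).toReal ≤ 0 := ge_of_tendsto' htend hle
      linarith
    have : (volume (A k)).toReal = 0 := le_antisymm htom ENNReal.toReal_nonneg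
    exact (ENNReal.toReal_eq_zero_iff _).mp this |>.resolve_right (by exact hfin.ne)
  -- combine
  have hunion : volume {x ∈ Q | R < |f x|} = 0 := by
    have hsub : {x ∈ Q | R < |f x|} ⊆ ⋃ k : ℕ, A k := by
      intro x hx
      obtain ⟨k, hk⟩ := exists_nat_one_div_lt (sub_pos.mpr hx.2)
      refine Set.mem_iUnion.mpr ⟨k, hx.1, ?_⟩
      have : (1:ℝ) / (k + 1) < |f x| - R := by
        simpa using hk
      linarith
    refine measure_mono_null hsub ?_
    exact measure_iUnion_null fun k => hAnull k
  rw [ae_restrict_iff' hQm]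
  rw [ae_iff]
  refine measure_mono_null ?_ hunion
  intro x hx
  simp only [Set.mem_setOf_eq, not_forall] at hx ⊢
  obtain ⟨hxQ, hxf⟩ := hx
  exact ⟨hxQ, lt_of_not_ge hxf⟩

end MixAux
end
section
open MeasureTheory Set
namespace MixAux

/-- Cauchy–Schwarz for continuous nonnegative functions on the unit cube. -/
lemma integral_CS {d : ℕ} (f h : (Fin d → ℝ) → ℝ) (cf : Continuous f) (ch : Continuous h)
    (hf : ∀ x, 0 ≤ f x) (hh : ∀ x, 0 ≤ h x) :
    ∫ x in Set.Icc (0 : Fin d → ℝ) 1, f x * h x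
      ≤ Real.sqrt (∫ x in Set.Icc (0 : Fin d → ℝ) 1, f x ^ 2)
        * Real.sqrt (∫ x in Set.Icc (0 : Fin d → ℝ) 1, h x ^ 2) := by
  set μ := volume.restrict (Set.Icc (0 : Fin d → ℝ) 1) with hμ
  haveI : IsFiniteMeasure μ := by
    constructor
    rw [hμ, Measure.restrict_apply_univ]
    exact isCompact_Icc.measure_lt_top
  have hpq : Real.HolderConjugate 2 2 := by
    constructor <;> norm_num
  obtain ⟨Cf, hCf⟩ := (isCompact_Icc.exists_bound_of_continuousOn
      (cf.continuousOn (s := Set.Icc (0 : Fin d → ℝ) 1)))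
  obtain ⟨Ch, hCh⟩ := (isCompact_Icc.exists_bound_of_continuousOn
      (ch.continuousOn (s := Set.Icc (0 : Fin d → ℝ) 1)))
  have hmf : MemLp f (ENNReal.ofReal 2) μ := by
    refine MemLp.of_bound cf.aestronglyMeasurable Cf ?_
    exact (ae_restrict_mem measurableSet_Icc).mono fun x hx => hCf x hx
  have hmh : MemLp h (ENNReal.ofReal 2) μ := by
    refine MemLp.of_bound ch.aestronglyMeasurable Ch ?_
    exact (ae_restrict_mem measurableSet_Icc).mono fun x hx => hCh x hx
  have key := integral_mul_le_Lp_mul_Lq_of_nonneg (μ := μ) hpq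
    (Filter.Eventually.of_forall hf) (Filter.Eventually.of_forall hh) hmf hmh
  have hconv : ∀ F : (Fin d → ℝ) → ℝ, ∫ a, F a ^ (2:ℝ) ∂μ = ∫ a, F a ^ 2 ∂μ := by
    intro F
    refine integral_congr_ae (Filter.Eventually.of_forall fun a => ?_)
    show F a ^ (2:ℝ) = F a ^ (2:ℕ)
    rw [← Real.rpow_natCast (F a) 2]
    norm_num
  rw [hconv f, hconv h] at key
  calc ∫ x, f x * h x ∂μ
      ≤ (∫ a, f a ^ 2 ∂μ) ^ ((1:ℝ)/2) * (∫ a, h a ^ 2 ∂μ) ^ ((1:ℝ)/2) := key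
    _ = Real.sqrt (∫ a, f a ^ 2 ∂μ) * Real.sqrt (∫ a, h a ^ 2 ∂μ) := by
        simp only [Real.sqrt_eq_rpow]

/-- Comparison: if `|g'| ≤ 2c√g` then `√g` decreases at most linearly. -/
lemma sqrt_comparison (g g' : ℝ → ℝ) (c : ℝ) (hc : 0 ≤ c)
    (hg : ∀ t, HasDerivAt g (g' t) t) (hgpos : ∀ t, 0 ≤ g t)
    (hb : ∀ t, |g' t| ≤ 2 * c * Real.sqrt (g t)) :
    ∀ t ≥ (0:ℝ), Real.sqrt (g 0) - c * t ≤ Real.sqrt (g t) := by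
  intro t ht
  have key : ∀ ε > (0:ℝ), Real.sqrt (g 0) - c * t ≤ Real.sqrt (g t) + ε := by
    intro ε hε
    set F : ℝ → ℝ := fun s => Real.sqrt (g s + ε ^ 2) + c * s with hF
    have hgε : ∀ s, 0 < g s + ε ^ 2 := fun s => by nlinarith [hgpos s]
    have hFd : ∀ s, HasDerivAt F (g' s / (2 * Real.sqrt (g s + ε ^ 2)) + c) s := by
      intro s
      have h1 : HasDerivAt (fun r => g r + ε ^ 2) (g' s) s := (hg s).add_const _
      have h2 := (Real.hasDerivAt_sqrt (hgε s).ne').comp s h1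
      have h3 : HasDerivAt (fun r => c * r) c s := by
        simpa using (hasDerivAt_id s).const_mul c
      have := h2.add h3
      convert this using 1
      · rfl
      · rfl
      · rfl
      · ring
    have hFmono : Monotone F := by
      refine monotone_of_deriv_nonneg (fun s => (hFd s).differentiableAt) fun s => ?_
      rw [(hFd s).deriv]
      have h4 : 0 < Real.sqrt (g s + ε ^ 2) := Real.sqrt_pos.mpr (hgε s)
      have h5 : Real.sqrt (g s) ≤ Real.sqrt (g s + ε ^ 2) :=
        Real.sqrt_le_sqrt (by nlinarith)
      have h6 : -(2 * c * Real.sqrt (g s + ε ^ 2)) ≤ g' s := by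
        have := (abs_le.mp (hb s)).1
        nlinarith [Real.sqrt_nonneg (g s)]
      have h10 : -c ≤ g' s / (2 * Real.sqrt (g s + ε ^ 2)) := by
        rw [le_div_iff₀ (by positivity)]
        nlinarith [h6]
      linarith
    have hm := hFmono ht
    have h7 : Real.sqrt (g 0) ≤ Real.sqrt (g 0 + ε ^ 2) :=
      Real.sqrt_le_sqrt (by nlinarith)
    have h8 : Real.sqrt (g t + ε ^ 2) ≤ Real.sqrt (g t) + ε := by
      rw [show g t + ε ^ 2 = g t + ε ^ 2 from rfl]
      refine Real.sqrt_le_iff.mpr ⟨by positivity, ?_⟩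
      nlinarith [Real.sq_sqrt (hgpos t), Real.sqrt_nonneg (g t)]
    simp only [hF] at hm
    nlinarith [hm, h7, h8]
  by_contra hcon
  push_neg at hcon
  have := key ((Real.sqrt (g 0) - c * t - Real.sqrt (g t)) / 2) (by linarith)
  linarith

end MixAux
end
section
open MeasureTheory Set
namespace MixAux


lemma main_aux (n : ℕ) (K R : ℝ)
    (u : ℝ → (Fin (n+1) → ℝ) → (Fin (n+1) → ℝ)) (ρ φ : ℝ → (Fin (n+1) → ℝ) → ℝ)
    (hu : ContDiff ℝ (⊤ : ℕ∞) fun p : ℝ × (Fin (n+1) → ℝ) => u p.1 p.2)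
    (hρ : ContDiff ℝ (⊤ : ℕ∞) fun p : ℝ × (Fin (n+1) → ℝ) => ρ p.1 p.2)
    (hφ : ContDiff ℝ (⊤ : ℕ∞) fun p : ℝ × (Fin (n+1) → ℝ) => φ p.1 p.2)
    (hu_per : ∀ t x (m : Fin (n+1) → ℤ), u t (x + fun i => (m i : ℝ)) = u t x)
    (hρ_per : ∀ t x (m : Fin (n+1) → ℤ), ρ t (x + fun i => (m i : ℝ)) = ρ t x)
    (hφ_per : ∀ t x (m : Fin (n+1) → ℤ), φ t (x + fun i => (m i : ℝ)) = φ t x)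
    (hu_K : ∀ t, Real.sqrt (∫ x in Set.Icc (0 : Fin (n+1) → ℝ) 1, ∑ i, (u t x i) ^ 2) ≤ K)
    (hdiv : ∀ t x, ∑ i, fderiv ℝ (u t) x (Pi.single i 1) i = 0)
    (hPDE : ∀ t x, deriv (fun s => ρ s x) t
      + ∑ i, fderiv ℝ (fun y => u t y i * ρ t y) x (Pi.single i 1) = 0)
    (hρ0_bdd : ∀ x, |ρ 0 x| ≤ R)
    (hpoisson : ∀ t x,
      ∑ i, fderiv ℝ (fun y => fderiv ℝ (φ t) y (Pi.single i 1)) x (Pi.single i 1) = ρ t x) :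
    ∀ t ≥ (0:ℝ),
      Real.sqrt (∫ x in Set.Icc (0 : Fin (n+1) → ℝ) 1,
          ∑ i, (fderiv ℝ (φ 0) x (Pi.single i 1)) ^ 2) - K * R * t
        ≤ Real.sqrt (∫ x in Set.Icc (0 : Fin (n+1) → ℝ) 1,
          ∑ i, (fderiv ℝ (φ t) x (Pi.single i 1)) ^ 2) := by
  have R0 : 0 ≤ R := le_trans (abs_nonneg _) (hρ0_bdd 0)
  have K0 : 0 ≤ K := le_trans (Real.sqrt_nonneg _) (hu_K 0)
  -- curried smoothness facts
  have sφ : ∀ t, ContDiff ℝ (⊤ : ℕ∞) (φ t) := fun t => curry_contDiff hφ t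
  have sρ : ∀ t, ContDiff ℝ (⊤ : ℕ∞) (ρ t) := fun t => curry_contDiff hρ t
  have sU : ∀ t, ContDiff ℝ (⊤ : ℕ∞) (u t) := fun t => curry_contDiff hu t
  have su : ∀ t i, ContDiff ℝ (⊤ : ℕ∞) (fun y => u t y i) := fun t i =>
    (ContinuousLinearMap.proj (R := ℝ) (φ := fun _ : Fin (n+1) => ℝ) i).contDiff.comp (sU t)
  have sdφ : ∀ t i, ContDiff ℝ (⊤ : ℕ∞) (fun y => fderiv ℝ (φ t) y (Pi.single i 1)) := fun t i =>
    ((sφ t).fderiv_right (m := (⊤ : ℕ∞)) (by simp)).clm_apply contDiff_const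
  have suρ : ∀ t i, ContDiff ℝ (⊤ : ℕ∞) (fun y => u t y i * ρ t y) := fun t i => (su t i).mul (sρ t)
  have sduρ : ∀ t i, ContDiff ℝ (⊤ : ℕ∞) (fun y => fderiv ℝ (fun z => u t z i * ρ t z) y (Pi.single i 1)) :=
    fun t i => ((suρ t i).fderiv_right (m := (⊤ : ℕ∞)) (by simp)).clm_apply contDiff_const
  -- time derivatives
  set ψ : ℝ → (Fin (n+1) → ℝ) → ℝ := fun s y =>
    fderiv ℝ (fun p : ℝ × (Fin (n+1) → ℝ) => φ p.1 p.2) (s, y) ((1:ℝ), 0) with hψdef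
  set ρt : ℝ → (Fin (n+1) → ℝ) → ℝ := fun s y =>
    fderiv ℝ (fun p : ℝ × (Fin (n+1) → ℝ) => ρ p.1 p.2) (s, y) ((1:ℝ), 0) with hρtdef
  have sΨ : ContDiff ℝ (⊤ : ℕ∞) (fun p : ℝ × (Fin (n+1) → ℝ) => ψ p.1 p.2) :=
    (hφ.fderiv_right (m := (⊤ : ℕ∞)) (by simp)).clm_apply contDiff_const
  have sPt : ContDiff ℝ (⊤ : ℕ∞) (fun p : ℝ × (Fin (n+1) → ℝ) => ρt p.1 p.2) :=
    (hρ.fderiv_right (m := (⊤ : ℕ∞)) (by simp)).clm_apply contDiff_const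
  have sψ : ∀ t, ContDiff ℝ (⊤ : ℕ∞) (ψ t) := fun t => curry_contDiff sΨ t
  have hψD : ∀ t x, HasDerivAt (fun s => φ s x) (ψ t x) t := fun t x => hasDerivAt_slice hφ t x
  have hρtD : ∀ t x, HasDerivAt (fun s => ρ s x) (ρt t x) t := fun t x => hasDerivAt_slice hρ t x
  have hPDE' : ∀ t x, ρt t x
      = -∑ i, fderiv ℝ (fun y => u t y i * ρ t y) x (Pi.single i 1) := by
    intro t x
    have h := hPDE t x
    rw [(hρtD t x).deriv] at h
    linarith
  have hclair : ∀ t x i, HasDerivAt (fun s => fderiv ℝ (φ s) x (Pi.single i 1))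
      (fderiv ℝ (ψ t) x (Pi.single i 1)) t := fun t x i => clairaut hφ t x _
  -- periodicity facts
  have hφper1 : ∀ t (j : Fin (n+1)) x,
      φ t (x + fun k => ((Pi.single j 1 : Fin (n+1) → ℤ) k : ℝ)) = φ t x :=
    fun t j x => hφ_per t x _
  have hρper1 : ∀ t (j : Fin (n+1)) x,
      ρ t (x + fun k => ((Pi.single j 1 : Fin (n+1) → ℤ) k : ℝ)) = ρ t x :=
    fun t j x => hρ_per t x _
  have huper1 : ∀ t i (j : Fin (n+1)) x,
      u t (x + fun k => ((Pi.single j 1 : Fin (n+1) → ℤ) k : ℝ)) i = u t x i :=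
    fun t i j x => by rw [hu_per t x _]
  have hdφper : ∀ t (j : Fin (n+1)) x,
      fderiv ℝ (φ t) (x + fun k => ((Pi.single j 1 : Fin (n+1) → ℤ) k : ℝ))
        = fderiv ℝ (φ t) x :=
    fun t j x => fderiv_shift ((sφ t).differentiable (by simp)) _ (fun y => hφ_per t y _) x
  have hduρper : ∀ t i (j : Fin (n+1)) x,
      fderiv ℝ (fun z => u t z i * ρ t z)
          (x + fun k => ((Pi.single j 1 : Fin (n+1) → ℤ) k : ℝ))
        = fderiv ℝ (fun z => u t z i * ρ t z) x := by
    intro t i j x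
    refine fderiv_shift ((suρ t i).differentiable (by simp)) _ (fun y => ?_) x
    rw [huper1 t i j y, hρper1 t j y]
  have hψper : ∀ t (j : Fin (n+1)) x,
      ψ t (x + fun k => ((Pi.single j 1 : Fin (n+1) → ℤ) k : ℝ)) = ψ t x := by
    intro t j x
    set c : Fin (n+1) → ℝ := fun k => ((Pi.single j 1 : Fin (n+1) → ℤ) k : ℝ) with hc
    have hper : ∀ p : ℝ × (Fin (n+1) → ℝ),
        (fun p : ℝ × (Fin (n+1) → ℝ) => φ p.1 p.2) (p + ((0:ℝ), c))
          = (fun p : ℝ × (Fin (n+1) → ℝ) => φ p.1 p.2) p := by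
      intro p
      show φ (p.1 + 0) (p.2 + c) = φ p.1 p.2
      rw [add_zero]
      exact hφ_per p.1 p.2 _
    have hsh := fderiv_shift (hφ.differentiable (by simp)) ((0:ℝ), c) hper (t, x)
    have heq : ((t, x) + ((0:ℝ), c) : ℝ × (Fin (n+1) → ℝ)) = (t, x + c) := by
      rw [Prod.mk_add_mk, add_zero]
    rw [heq] at hsh
    show fderiv ℝ _ (t, x + c) ((1:ℝ), 0) = fderiv ℝ _ (t, x) ((1:ℝ), 0)
    rw [hsh]
  -- coordinate divergence of u
  have hdiv' : ∀ t x, ∑ i, fderiv ℝ (fun y => u t y i) x (Pi.single i 1) = 0 := by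
    intro t x
    have hco : ∀ (i : Fin (n+1)) (v : Fin (n+1) → ℝ),
        fderiv ℝ (fun y => u t y i) x v = fderiv ℝ (u t) x v i := by
      intro i v
      have h := ((ContinuousLinearMap.proj (R := ℝ) (φ := fun _ : Fin (n+1) => ℝ) i).hasFDerivAt).comp x
        (((sU t).differentiable (by simp) x).hasFDerivAt)
      have h2 : HasFDerivAt (fun y => u t y i)
          ((ContinuousLinearMap.proj (R := ℝ) (φ := fun _ : Fin (n+1) => ℝ) i).comp
            (fderiv ℝ (u t) x)) x := h
      rw [h2.fderiv]
      rfl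
    rw [Finset.sum_congr rfl fun i _ => hco i _]
    exact hdiv t x

  -- helper: pointwise expansion of fderiv of a product, applied to a vector
  have hmulD : ∀ (f h : (Fin (n+1) → ℝ) → ℝ) (x v : Fin (n+1) → ℝ),
      DifferentiableAt ℝ f x → DifferentiableAt ℝ h x →
      fderiv ℝ (fun y => f y * h y) x v = f x * fderiv ℝ h x v + h x * fderiv ℝ f x v := by
    intro f h x v hf hh
    rw [fderiv_fun_mul hf hh]
    simp [smul_eq_mul]
  -- Identity 1 : ∫ (φρ + |∇φ|²) = 0
  have ID1 : ∀ t, (∫ x in Set.Icc (0 : Fin (n+1) → ℝ) 1,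
      (φ t x * ρ t x + ∑ i, (fderiv ℝ (φ t) x (Pi.single i 1)) ^ 2)) = 0 := by
    intro t
    have hF : ∀ i, ContDiff ℝ (⊤ : ℕ∞) (fun y => φ t y * fderiv ℝ (φ t) y (Pi.single i 1)) :=
      fun i => (sφ t).mul (sdφ t i)
    have hper : ∀ (i j : Fin (n+1)) (x : Fin (n+1) → ℝ),
        (fun y => φ t y * fderiv ℝ (φ t) y (Pi.single i 1))
          (x + fun k => ((Pi.single j 1 : Fin (n+1) → ℤ) k : ℝ))
        = (fun y => φ t y * fderiv ℝ (φ t) y (Pi.single i 1)) x := by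
      intro i j x
      simp only
      rw [hφper1 t j x, hdφper t j x]
    have A := integral_div_eq_zero _ hF hper
    have hpt : ∀ x : Fin (n+1) → ℝ,
        ∑ i, fderiv ℝ (fun y => φ t y * fderiv ℝ (φ t) y (Pi.single i 1)) x (Pi.single i 1)
        = φ t x * ρ t x + ∑ i, (fderiv ℝ (φ t) x (Pi.single i 1)) ^ 2 := by
      intro x
      have he : ∀ i : Fin (n+1),
          fderiv ℝ (fun y => φ t y * fderiv ℝ (φ t) y (Pi.single i 1)) x (Pi.single i 1)
          = φ t x * fderiv ℝ (fun y => fderiv ℝ (φ t) y (Pi.single i 1)) x (Pi.single i 1)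
            + (fderiv ℝ (φ t) x (Pi.single i 1)) ^ 2 := by
        intro i
        rw [hmulD _ _ x _ (((sφ t).differentiable (by simp)) x) (((sdφ t i).differentiable (by simp)) x)]
        ring
      rw [Finset.sum_congr rfl fun i _ => he i, Finset.sum_add_distrib, ← Finset.mul_sum,
        hpoisson t x]
    rw [← A]
    exact setIntegral_congr_fun measurableSet_Icc fun x _ => (hpt x).symm
  -- Identity 2 : ∫ (ψρ + ∇ψ·∇φ) = 0
  have ID2 : ∀ t, (∫ x in Set.Icc (0 : Fin (n+1) → ℝ) 1,
      (ψ t x * ρ t x + ∑ i, fderiv ℝ (ψ t) x (Pi.single i 1)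
        * fderiv ℝ (φ t) x (Pi.single i 1))) = 0 := by
    intro t
    have hF : ∀ i, ContDiff ℝ (⊤ : ℕ∞) (fun y => ψ t y * fderiv ℝ (φ t) y (Pi.single i 1)) :=
      fun i => (sψ t).mul (sdφ t i)
    have hper : ∀ (i j : Fin (n+1)) (x : Fin (n+1) → ℝ),
        (fun y => ψ t y * fderiv ℝ (φ t) y (Pi.single i 1))
          (x + fun k => ((Pi.single j 1 : Fin (n+1) → ℤ) k : ℝ))
        = (fun y => ψ t y * fderiv ℝ (φ t) y (Pi.single i 1)) x := by
      intro i j x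
      simp only
      rw [hψper t j x, hdφper t j x]
    have A := integral_div_eq_zero _ hF hper
    have hpt : ∀ x : Fin (n+1) → ℝ,
        ∑ i, fderiv ℝ (fun y => ψ t y * fderiv ℝ (φ t) y (Pi.single i 1)) x (Pi.single i 1)
        = ψ t x * ρ t x + ∑ i, fderiv ℝ (ψ t) x (Pi.single i 1)
            * fderiv ℝ (φ t) x (Pi.single i 1) := by
      intro x
      have he : ∀ i : Fin (n+1),
          fderiv ℝ (fun y => ψ t y * fderiv ℝ (φ t) y (Pi.single i 1)) x (Pi.single i 1)
          = ψ t x * fderiv ℝ (fun y => fderiv ℝ (φ t) y (Pi.single i 1)) x (Pi.single i 1)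
            + fderiv ℝ (ψ t) x (Pi.single i 1) * fderiv ℝ (φ t) x (Pi.single i 1) := by
        intro i
        rw [hmulD _ _ x _ (((sψ t).differentiable (by simp)) x) (((sdφ t i).differentiable (by simp)) x)]
        ring
      rw [Finset.sum_congr rfl fun i _ => he i, Finset.sum_add_distrib, ← Finset.mul_sum,
        hpoisson t x]
    rw [← A]
    exact setIntegral_congr_fun measurableSet_Icc fun x _ => (hpt x).symm
  -- Identity 3 : ∫ (φ · div(uρ) + ρ u·∇φ) = 0
  have ID3 : ∀ t, (∫ x in Set.Icc (0 : Fin (n+1) → ℝ) 1,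
      (φ t x * (∑ i, fderiv ℝ (fun y => u t y i * ρ t y) x (Pi.single i 1))
        + ρ t x * ∑ i, u t x i * fderiv ℝ (φ t) x (Pi.single i 1))) = 0 := by
    intro t
    have hF : ∀ i, ContDiff ℝ (⊤ : ℕ∞) (fun y => φ t y * (u t y i * ρ t y)) :=
      fun i => (sφ t).mul (suρ t i)
    have hper : ∀ (i j : Fin (n+1)) (x : Fin (n+1) → ℝ),
        (fun y => φ t y * (u t y i * ρ t y))
          (x + fun k => ((Pi.single j 1 : Fin (n+1) → ℤ) k : ℝ))
        = (fun y => φ t y * (u t y i * ρ t y)) x := by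
      intro i j x
      simp only
      rw [hφper1 t j x, huper1 t i j x, hρper1 t j x]
    have A := integral_div_eq_zero _ hF hper
    have hpt : ∀ x : Fin (n+1) → ℝ,
        ∑ i, fderiv ℝ (fun y => φ t y * (u t y i * ρ t y)) x (Pi.single i 1)
        = φ t x * (∑ i, fderiv ℝ (fun y => u t y i * ρ t y) x (Pi.single i 1))
          + ρ t x * ∑ i, u t x i * fderiv ℝ (φ t) x (Pi.single i 1) := by
      intro x
      have he : ∀ i : Fin (n+1),
          fderiv ℝ (fun y => φ t y * (u t y i * ρ t y)) x (Pi.single i 1)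
          = φ t x * fderiv ℝ (fun y => u t y i * ρ t y) x (Pi.single i 1)
            + ρ t x * (u t x i * fderiv ℝ (φ t) x (Pi.single i 1)) := by
        intro i
        rw [hmulD _ _ x _ (((sφ t).differentiable (by simp)) x) (((suρ t i).differentiable (by simp)) x)]
        ring
      rw [Finset.sum_congr rfl fun i _ => he i, Finset.sum_add_distrib, ← Finset.mul_sum,
        ← Finset.mul_sum]
    rw [← A]
    exact setIntegral_congr_fun measurableSet_Icc fun x _ => (hpt x).symm
  -- Identity 4 : moments
  have ID4 : ∀ (t : ℝ) (M : ℕ), (∫ x in Set.Icc (0 : Fin (n+1) → ℝ) 1,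
      (((M:ℝ) + 1) * ρ t x ^ M
        * ∑ i, fderiv ℝ (fun y => u t y i * ρ t y) x (Pi.single i 1))) = 0 := by
    intro t M
    have hF : ∀ i, ContDiff ℝ (⊤ : ℕ∞) (fun y => u t y i * ρ t y ^ (M + 1)) :=
      fun i => (su t i).mul ((sρ t).pow (M + 1))
    have hper : ∀ (i j : Fin (n+1)) (x : Fin (n+1) → ℝ),
        (fun y => u t y i * ρ t y ^ (M + 1))
          (x + fun k => ((Pi.single j 1 : Fin (n+1) → ℤ) k : ℝ))
        = (fun y => u t y i * ρ t y ^ (M + 1)) x := by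
      intro i j x
      simp only
      rw [huper1 t i j x, hρper1 t j x]
    have A := integral_div_eq_zero _ hF hper
    have hpowD : ∀ (x : Fin (n+1) → ℝ) (v : Fin (n+1) → ℝ),
        fderiv ℝ (fun y => ρ t y ^ (M + 1)) x v
          = ((M:ℝ) + 1) * ρ t x ^ M * fderiv ℝ (ρ t) x v := by
      intro x v
      have hd := (hasDerivAt_pow (M + 1) (ρ t x)).comp_hasFDerivAt x
        (((sρ t).differentiable (by simp) x).hasFDerivAt)
      have hd' : HasFDerivAt (fun y => ρ t y ^ (M + 1))
          ((((M + 1 : ℕ) : ℝ) * ρ t x ^ (M + 1 - 1)) • fderiv ℝ (ρ t) x) x := hd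
      rw [hd'.fderiv]
      simp [smul_eq_mul]
    have hpt : ∀ x : Fin (n+1) → ℝ,
        ((M:ℝ) + 1) * ρ t x ^ M
            * ∑ i, fderiv ℝ (fun y => u t y i * ρ t y) x (Pi.single i 1)
        = ∑ i, fderiv ℝ (fun y => u t y i * ρ t y ^ (M + 1)) x (Pi.single i 1) := by
      intro x
      have e1 : ∀ i : Fin (n+1),
          fderiv ℝ (fun y => u t y i * ρ t y ^ (M + 1)) x (Pi.single i 1)
          = ((M:ℝ) + 1) * ρ t x ^ M
              * (u t x i * fderiv ℝ (ρ t) x (Pi.single i 1))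
            + ρ t x ^ (M + 1) * fderiv ℝ (fun y => u t y i) x (Pi.single i 1) := by
        intro i
        rw [hmulD _ _ x _ (((su t i).differentiable (by simp)) x)
          ((((sρ t).pow (M+1)).differentiable (by simp)) x), hpowD x _]
        ring
      have e2 : ∀ i : Fin (n+1),
          fderiv ℝ (fun y => u t y i * ρ t y) x (Pi.single i 1)
          = u t x i * fderiv ℝ (ρ t) x (Pi.single i 1)
            + ρ t x * fderiv ℝ (fun y => u t y i) x (Pi.single i 1) := by
        intro i
        rw [hmulD _ _ x _ (((su t i).differentiable (by simp)) x)
          (((sρ t).differentiable (by simp)) x)]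
      calc ((M:ℝ) + 1) * ρ t x ^ M * ∑ i, fderiv ℝ (fun y => u t y i * ρ t y) x (Pi.single i 1)
          = ((M:ℝ) + 1) * ρ t x ^ M * ∑ i, (u t x i * fderiv ℝ (ρ t) x (Pi.single i 1)
              + ρ t x * fderiv ℝ (fun y => u t y i) x (Pi.single i 1)) := by
            rw [Finset.sum_congr rfl fun i _ => e2 i]
        _ = ((M:ℝ) + 1) * ρ t x ^ M * ((∑ i, u t x i * fderiv ℝ (ρ t) x (Pi.single i 1))
            + ρ t x * ∑ i, fderiv ℝ (fun y => u t y i) x (Pi.single i 1)) := by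
            rw [Finset.sum_add_distrib, ← Finset.mul_sum]
        _ = ∑ i, (((M:ℝ) + 1) * ρ t x ^ M * (u t x i * fderiv ℝ (ρ t) x (Pi.single i 1))
              + ρ t x ^ (M + 1) * fderiv ℝ (fun y => u t y i) x (Pi.single i 1)) := by
            rw [Finset.sum_add_distrib, ← Finset.mul_sum, ← Finset.mul_sum, hdiv' t x]
            ring
        _ = ∑ i, fderiv ℝ (fun y => u t y i * ρ t y ^ (M + 1)) x (Pi.single i 1) :=
            Finset.sum_congr rfl fun i _ => (e1 i).symm
    rw [← A]
    exact setIntegral_congr_fun measurableSet_Icc fun x _ => hpt x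

  -- moment conservation
  have hmom : ∀ (m : ℕ) (t : ℝ),
      (∫ x in Set.Icc (0 : Fin (n+1) → ℝ) 1, (ρ t x) ^ (2 * m))
        = ∫ x in Set.Icc (0 : Fin (n+1) → ℝ) 1, (ρ 0 x) ^ (2 * m) := by
    intro m t
    rcases Nat.eq_zero_or_pos m with hm | hm
    · subst hm; simp
    obtain ⟨m', rfl⟩ := Nat.exists_eq_add_of_le hm
    set q : ℕ := 2 * (1 + m') with hq
    have hq1 : q = (2 * m' + 1) + 1 := by omega
    set H : ℝ → ℝ := fun s => ∫ x in Set.Icc (0 : Fin (n+1) → ℝ) 1, (ρ s x) ^ q with hH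
    have hHd : ∀ s, HasDerivAt H 0 s := by
      intro s
      have hder := hasDerivAt_setIntegral_cube (fun r x => (ρ r x) ^ q)
        (fun r x => (q:ℝ) * (ρ r x) ^ (q - 1) * ρt r x)
        (hρ.continuous.pow q)
        (((continuous_const.mul (hρ.continuous.pow (q - 1))).mul sPt.continuous))
        (fun x r => (hρtD r x).pow q) s
      have hzero : (∫ x in Set.Icc (0 : Fin (n+1) → ℝ) 1,
          (q:ℝ) * (ρ s x) ^ (q - 1) * ρt s x) = 0 := by
        have heq : ∀ x : Fin (n+1) → ℝ, (q:ℝ) * (ρ s x) ^ (q - 1) * ρt s x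
            = -((((2 * m' + 1 : ℕ):ℝ) + 1) * ρ s x ^ (2 * m' + 1)
                * ∑ i, fderiv ℝ (fun y => u s y i * ρ s y) x (Pi.single i 1)) := by
          intro x
          rw [hPDE' s x]
          have h1 : q - 1 = 2 * m' + 1 := by rw [hq]; omega
          have h2 : ((q:ℕ):ℝ) = ((2 * m' + 1 : ℕ):ℝ) + 1 := by
            rw [hq1]; push_cast; ring
          rw [h1, h2]
          ring
        rw [setIntegral_congr_fun measurableSet_Icc fun x _ => heq x, integral_neg,
          ID4 s (2 * m' + 1)]
        simp
      rw [← hzero]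
      exact hder
    have hconst := is_const_of_deriv_eq_zero (f := H)
      (fun s => (hHd s).differentiableAt) (fun s => (hHd s).deriv) t 0
    exact hconst
  -- moment bound
  have hmb : ∀ (t : ℝ) (m : ℕ),
      (∫ x in Set.Icc (0 : Fin (n+1) → ℝ) 1, (ρ t x) ^ (2 * m)) ≤ R ^ (2 * m) := by
    intro t m
    rw [hmom m t]
    have h1 : (∫ x in Set.Icc (0 : Fin (n+1) → ℝ) 1, (ρ 0 x) ^ (2 * m))
        ≤ ∫ _x in Set.Icc (0 : Fin (n+1) → ℝ) 1, R ^ (2 * m) := by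
      refine setIntegral_mono_on
        (((hρ.continuous.comp (continuous_const.prodMk continuous_id)).pow
          (2*m)).continuousOn.integrableOn_compact isCompact_Icc)
        (integrableOn_const isCompact_Icc.measure_lt_top.ne)
        measurableSet_Icc fun x _ => ?_
      calc (ρ 0 x) ^ (2 * m) = |ρ 0 x| ^ (2 * m) := (Even.pow_abs (even_two_mul m) _).symm
        _ ≤ R ^ (2 * m) := pow_le_pow_left₀ (abs_nonneg _) (hρ0_bdd x) _
    have h2 : (∫ _x in Set.Icc (0 : Fin (n+1) → ℝ) 1, R ^ (2 * m)) = R ^ (2 * m) := by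
      rw [setIntegral_const, measureReal_def, volume_Icc_cube]
      simp
    linarith
  -- a.e. bound on ρ
  have hae : ∀ t, ∀ᵐ x ∂(volume.restrict (Set.Icc (0 : Fin (n+1) → ℝ) 1)), |ρ t x| ≤ R :=
    fun t => ae_abs_le_of_moments R R0 (ρ t)
      (hρ.continuous.comp (continuous_const.prodMk continuous_id)) (hmb t)

  -- the energy and its derivative
  set g : ℝ → ℝ := fun s => ∫ x in Set.Icc (0 : Fin (n+1) → ℝ) 1,
    ∑ i, (fderiv ℝ (φ s) x (Pi.single i 1)) ^ 2 with hgdef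
  set E : ℝ → ℝ := fun s => ∫ x in Set.Icc (0 : Fin (n+1) → ℝ) 1,
    ρ s x * ∑ i, u s x i * fderiv ℝ (φ s) x (Pi.single i 1) with hEdef
  have hgpos : ∀ s, 0 ≤ g s := fun s =>
    setIntegral_nonneg measurableSet_Icc fun x _ => Finset.sum_nonneg fun i _ => sq_nonneg _
  have sdψ : ∀ t i, ContDiff ℝ (⊤ : ℕ∞) (fun y => fderiv ℝ (ψ t) y (Pi.single i 1)) := fun t i =>
    ((sψ t).fderiv_right (m := (⊤ : ℕ∞)) (by simp)).clm_apply contDiff_const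
  have hgD : ∀ t, HasDerivAt g (-2 * E t) t := by
    intro t
    have cdφ : ∀ i : Fin (n+1), Continuous fun p : ℝ × (Fin (n+1) → ℝ) =>
        fderiv ℝ (φ p.1) p.2 (Pi.single i 1) := fun i => cont_fderiv_curry hφ _
    have cdψ : ∀ i : Fin (n+1), Continuous fun p : ℝ × (Fin (n+1) → ℝ) =>
        fderiv ℝ (ψ p.1) p.2 (Pi.single i 1) := fun i => cont_fderiv_curry sΨ _
    -- step a : differentiate under the integral
    have ha' : HasDerivAt (fun s => ∫ x in Set.Icc (0 : Fin (n+1) → ℝ) 1,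
        ∑ i, (fderiv ℝ (φ s) x (Pi.single i 1)) ^ 2)
        (∫ x in Set.Icc (0 : Fin (n+1) → ℝ) 1,
        ∑ i, 2 * fderiv ℝ (φ t) x (Pi.single i 1) * fderiv ℝ (ψ t) x (Pi.single i 1)) t := by
      refine hasDerivAt_setIntegral_cube
        (fun s x => ∑ i, (fderiv ℝ (φ s) x (Pi.single i 1)) ^ 2)
        (fun s x => ∑ i, 2 * fderiv ℝ (φ s) x (Pi.single i 1)
          * fderiv ℝ (ψ s) x (Pi.single i 1)) ?_ ?_ ?_ t
      · exact continuous_finset_sum _ fun i _ => (cdφ i).pow 2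
      · exact continuous_finset_sum _ fun i _ => ((continuous_const.mul (cdφ i)).mul (cdψ i))
      · intro x s
        refine HasDerivAt.fun_sum fun i _ => ?_
        have h := (hclair s x i).pow 2
        simpa [Pi.pow_def] using h
    have ha : HasDerivAt g (∫ x in Set.Icc (0 : Fin (n+1) → ℝ) 1,
        ∑ i, 2 * fderiv ℝ (φ t) x (Pi.single i 1) * fderiv ℝ (ψ t) x (Pi.single i 1)) t := ha'
    -- integrability of everything in sight
    have iψρ : IntegrableOn (fun x => ψ t x * ρ t x) (Set.Icc (0:Fin (n+1) → ℝ) 1) :=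
      ((sψ t).continuous.mul (sρ t).continuous).continuousOn.integrableOn_compact isCompact_Icc
    have isum : IntegrableOn (fun x => ∑ i, fderiv ℝ (ψ t) x (Pi.single i 1)
        * fderiv ℝ (φ t) x (Pi.single i 1)) (Set.Icc (0:Fin (n+1) → ℝ) 1) :=
      (continuous_finset_sum _ fun i _ => ((sdψ t i).continuous.mul
        (sdφ t i).continuous)).continuousOn.integrableOn_compact isCompact_Icc
    have hsplit2 := ID2 t
    rw [integral_add iψρ isum] at hsplit2
    -- step b : value equals -2 ∫ ψρ
    have hb : (∫ x in Set.Icc (0 : Fin (n+1) → ℝ) 1,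
        ∑ i, 2 * fderiv ℝ (φ t) x (Pi.single i 1) * fderiv ℝ (ψ t) x (Pi.single i 1))
        = -2 * ∫ x in Set.Icc (0 : Fin (n+1) → ℝ) 1, ψ t x * ρ t x := by
      have heq : ∀ x : Fin (n+1) → ℝ,
          (∑ i, 2 * fderiv ℝ (φ t) x (Pi.single i 1) * fderiv ℝ (ψ t) x (Pi.single i 1))
          = 2 * ∑ i, fderiv ℝ (ψ t) x (Pi.single i 1) * fderiv ℝ (φ t) x (Pi.single i 1) := by
        intro x
        rw [Finset.mul_sum]
        exact Finset.sum_congr rfl fun i _ => by ring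
      rw [setIntegral_congr_fun measurableSet_Icc fun x _ => heq x, integral_const_mul]
      linarith
    -- step c : differentiate ∫ φρ
    have hc : HasDerivAt (fun s => ∫ x in Set.Icc (0 : Fin (n+1) → ℝ) 1, φ s x * ρ s x)
        (∫ x in Set.Icc (0 : Fin (n+1) → ℝ) 1, (ψ t x * ρ t x + φ t x * ρt t x)) t := by
      refine hasDerivAt_setIntegral_cube (fun s x => φ s x * ρ s x)
        (fun s x => ψ s x * ρ s x + φ s x * ρt s x) ?_ ?_ ?_ t
      · exact hφ.continuous.mul hρ.continuous
      · exact (sΨ.continuous.mul hρ.continuous).add (hφ.continuous.mul sPt.continuous)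
      · intro x s
        exact (hψD s x).mul (hρtD s x)
    -- step d : ∫ φρ = -g
    have iφρ : ∀ s, IntegrableOn (fun x => φ s x * ρ s x) (Set.Icc (0:Fin (n+1) → ℝ) 1) :=
      fun s => ((sφ s).continuous.mul (sρ s).continuous).continuousOn.integrableOn_compact
        isCompact_Icc
    have isq : ∀ s, IntegrableOn (fun x => ∑ i, (fderiv ℝ (φ s) x (Pi.single i 1))^2)
        (Set.Icc (0:Fin (n+1) → ℝ) 1) := fun s =>
      (continuous_finset_sum _ fun i _ => ((sdφ s i).continuous.pow 2)).continuousOn.integrableOn_compact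
        isCompact_Icc
    have hsplit1 : ∀ s, (∫ x in Set.Icc (0:Fin (n+1) → ℝ) 1, φ s x * ρ s x) = -g s := by
      intro s
      have h := ID1 s
      rw [integral_add (iφρ s) (isq s)] at h
      have : g s = ∫ x in Set.Icc (0:Fin (n+1) → ℝ) 1,
          ∑ i, (fderiv ℝ (φ s) x (Pi.single i 1))^2 := rfl
      linarith [h, this]
    have hcg : HasDerivAt g
        (-(∫ x in Set.Icc (0 : Fin (n+1) → ℝ) 1, (ψ t x * ρ t x + φ t x * ρt t x))) t := by
      have he : (fun s => ∫ x in Set.Icc (0:Fin (n+1) → ℝ) 1, φ s x * ρ s x)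
          = fun s => -g s := funext fun s => hsplit1 s
      rw [he] at hc
      have h2 := hc.neg
      simpa [Pi.neg_def] using h2
    have huniq := ha.unique hcg
    -- split ∫ (ψρ + φρt)
    have iφρt : IntegrableOn (fun x => φ t x * ρt t x) (Set.Icc (0:Fin (n+1) → ℝ) 1) :=
      ((sφ t).continuous.mul (curry_contDiff sPt t).continuous).continuousOn.integrableOn_compact
        isCompact_Icc
    rw [hb, integral_add iψρ iφρt] at huniq
    -- so ∫ψρ = ∫φρt
    have hkey : (∫ x in Set.Icc (0:Fin (n+1) → ℝ) 1, ψ t x * ρ t x)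
        = ∫ x in Set.Icc (0:Fin (n+1) → ℝ) 1, φ t x * ρt t x := by linarith
    -- step f : ∫ φρt = E t
    have hropt : ∀ x : Fin (n+1) → ℝ, φ t x * ρt t x
        = -(φ t x * ∑ i, fderiv ℝ (fun y => u t y i * ρ t y) x (Pi.single i 1)) := by
      intro x
      rw [hPDE' t x]
      ring
    have iφdiv : IntegrableOn (fun x => φ t x
        * ∑ i, fderiv ℝ (fun y => u t y i * ρ t y) x (Pi.single i 1))
        (Set.Icc (0:Fin (n+1) → ℝ) 1) :=
      ((sφ t).continuous.mul (continuous_finset_sum _ fun i _ =>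
        (sduρ t i).continuous)).continuousOn.integrableOn_compact isCompact_Icc
    have iρS : IntegrableOn (fun x => ρ t x
        * ∑ i, u t x i * fderiv ℝ (φ t) x (Pi.single i 1)) (Set.Icc (0:Fin (n+1) → ℝ) 1) :=
      ((sρ t).continuous.mul (continuous_finset_sum _ fun i _ =>
        ((su t i).continuous.mul (sdφ t i).continuous))).continuousOn.integrableOn_compact
        isCompact_Icc
    have hsplit3 := ID3 t
    rw [integral_add iφdiv iρS] at hsplit3
    have hf : (∫ x in Set.Icc (0:Fin (n+1) → ℝ) 1, φ t x * ρt t x) = E t := by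
      rw [setIntegral_congr_fun measurableSet_Icc fun x _ => hropt x, integral_neg]
      have : E t = ∫ x in Set.Icc (0:Fin (n+1) → ℝ) 1,
          ρ t x * ∑ i, u t x i * fderiv ℝ (φ t) x (Pi.single i 1) := rfl
      linarith [hsplit3, this]
    -- final value
    have hval : (∫ x in Set.Icc (0 : Fin (n+1) → ℝ) 1,
        ∑ i, 2 * fderiv ℝ (φ t) x (Pi.single i 1) * fderiv ℝ (ψ t) x (Pi.single i 1))
        = -2 * E t := by
      rw [hb, hkey, hf]
    rw [hval] at ha
    exact ha
  -- Hölder-type bound on E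
  have hE : ∀ t, |E t| ≤ K * R * Real.sqrt (g t) := by
    intro t
    set S : (Fin (n+1) → ℝ) → ℝ :=
      fun x => ∑ i, u t x i * fderiv ℝ (φ t) x (Pi.single i 1) with hS
    have cS : Continuous S := continuous_finset_sum _ fun i _ =>
      ((su t i).continuous.mul (sdφ t i).continuous)
    have cρc : Continuous (ρ t) := (sρ t).continuous
    have cF : Continuous fun x : Fin (n+1) → ℝ => Real.sqrt (∑ i, (u t x i)^2) :=
      (continuous_finset_sum _ fun i _ => ((su t i).continuous.pow 2)).sqrt
    have cG : Continuous fun x : Fin (n+1) → ℝ =>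
        Real.sqrt (∑ i, (fderiv ℝ (φ t) x (Pi.single i 1))^2) :=
      (continuous_finset_sum _ fun i _ => ((sdφ t i).continuous.pow 2)).sqrt
    have h1 : |E t| ≤ ∫ x in Set.Icc (0:Fin (n+1) → ℝ) 1, |ρ t x| * |S x| := by
      have h := norm_integral_le_integral_norm
        (μ := volume.restrict (Set.Icc (0:Fin (n+1) → ℝ) 1)) (f := fun x => ρ t x * S x)
      simpa [Real.norm_eq_abs, abs_mul] using h
    have h2 : (∫ x in Set.Icc (0:Fin (n+1) → ℝ) 1, |ρ t x| * |S x|)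
        ≤ ∫ x in Set.Icc (0:Fin (n+1) → ℝ) 1, R * |S x| := by
      refine integral_mono_ae
        ((cρc.abs.mul cS.abs).continuousOn.integrableOn_compact isCompact_Icc)
        ((continuous_const.mul cS.abs).continuousOn.integrableOn_compact isCompact_Icc) ?_
      refine (hae t).mono fun x hx => ?_
      exact mul_le_mul_of_nonneg_right hx (abs_nonneg _)
    have h3 : (∫ x in Set.Icc (0:Fin (n+1) → ℝ) 1, R * |S x|)
        = R * ∫ x in Set.Icc (0:Fin (n+1) → ℝ) 1, |S x| := integral_const_mul _ _
    have h4 : (∫ x in Set.Icc (0:Fin (n+1) → ℝ) 1, |S x|)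
        ≤ ∫ x in Set.Icc (0:Fin (n+1) → ℝ) 1, Real.sqrt (∑ i, (u t x i)^2)
            * Real.sqrt (∑ i, (fderiv ℝ (φ t) x (Pi.single i 1))^2) := by
      refine integral_mono (cS.abs.continuousOn.integrableOn_compact isCompact_Icc)
        ((cF.mul cG).continuousOn.integrableOn_compact isCompact_Icc) fun x => ?_
      have hcs := Finset.sum_mul_sq_le_sq_mul_sq Finset.univ (fun i => u t x i)
        (fun i => fderiv ℝ (φ t) x (Pi.single i 1))
      have habs : |S x| = Real.sqrt ((S x)^2) := (Real.sqrt_sq_eq_abs _).symm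
      rw [habs, ← Real.sqrt_mul (Finset.sum_nonneg fun i _ => sq_nonneg _)]
      exact Real.sqrt_le_sqrt hcs
    have h5 := integral_CS (fun x => Real.sqrt (∑ i, (u t x i)^2))
      (fun x => Real.sqrt (∑ i, (fderiv ℝ (φ t) x (Pi.single i 1))^2)) cF cG
      (fun x => Real.sqrt_nonneg _) (fun x => Real.sqrt_nonneg _)
    have h6 : (∫ x in Set.Icc (0:Fin (n+1) → ℝ) 1, (Real.sqrt (∑ i, (u t x i)^2))^2)
        = ∫ x in Set.Icc (0:Fin (n+1) → ℝ) 1, ∑ i, (u t x i)^2 :=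
      setIntegral_congr_fun measurableSet_Icc fun x _ =>
        Real.sq_sqrt (Finset.sum_nonneg fun i _ => sq_nonneg _)
    have h7 : (∫ x in Set.Icc (0:Fin (n+1) → ℝ) 1,
          (Real.sqrt (∑ i, (fderiv ℝ (φ t) x (Pi.single i 1))^2))^2)
        = ∫ x in Set.Icc (0:Fin (n+1) → ℝ) 1,
          ∑ i, (fderiv ℝ (φ t) x (Pi.single i 1))^2 :=
      setIntegral_congr_fun measurableSet_Icc fun x _ =>
        Real.sq_sqrt (Finset.sum_nonneg fun i _ => sq_nonneg _)
    rw [h6, h7] at h5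
    have h8 : Real.sqrt (∫ x in Set.Icc (0:Fin (n+1) → ℝ) 1, ∑ i, (u t x i)^2) ≤ K := hu_K t
    have h9 : Real.sqrt (∫ x in Set.Icc (0:Fin (n+1) → ℝ) 1,
        ∑ i, (fderiv ℝ (φ t) x (Pi.single i 1))^2) = Real.sqrt (g t) := rfl
    rw [h9] at h5
    have h10 : (∫ x in Set.Icc (0:Fin (n+1) → ℝ) 1, Real.sqrt (∑ i, (u t x i)^2)
        * Real.sqrt (∑ i, (fderiv ℝ (φ t) x (Pi.single i 1))^2)) ≤ K * Real.sqrt (g t) :=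
      h5.trans (mul_le_mul_of_nonneg_right h8 (Real.sqrt_nonneg _))
    calc |E t| ≤ ∫ x in Set.Icc (0:Fin (n+1) → ℝ) 1, |ρ t x| * |S x| := h1
      _ ≤ ∫ x in Set.Icc (0:Fin (n+1) → ℝ) 1, R * |S x| := h2
      _ = R * ∫ x in Set.Icc (0:Fin (n+1) → ℝ) 1, |S x| := h3
      _ ≤ R * (K * Real.sqrt (g t)) :=
          mul_le_mul_of_nonneg_left (h4.trans h10) R0
      _ = K * R * Real.sqrt (g t) := by ring
  -- conclusion via the ODE comparison lemma
  have hbnd : ∀ s, |(-2 : ℝ) * E s| ≤ 2 * (K * R) * Real.sqrt (g s) := by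
    intro s
    rw [abs_mul]
    have : |(-2 : ℝ)| = 2 := by norm_num
    rw [this]
    nlinarith [hE s]
  have hfin := sqrt_comparison g (fun s => -2 * E s) (K * R)
    (mul_nonneg K0 R0) hgD hgpos hbnd
  intro t ht
  exact hfin t ht

end MixAux
end

/-- Linear-in-time lower bound for the functional mixing scale under a
uniform-in-time kinetic energy budget `‖u(t,·)‖_{L²} ≤ K`: with `Δφ(t,·) = ρ(t,·)`,
`φ` of zero average, one has
`‖ρ(t,·)‖_{Ḣ^{-1}} = ‖∇φ(t,·)‖_{L²} ≥ ‖ρ̄‖_{Ḣ^{-1}} − K ‖ρ̄‖_{L^∞} t`. -/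
theorem mixing_lower_bound_kinetic (d : ℕ) (K R : ℝ)
    (u : ℝ → (Fin d → ℝ) → (Fin d → ℝ)) (ρ φ : ℝ → (Fin d → ℝ) → ℝ)
    (hu : ContDiff ℝ (⊤ : ℕ∞) fun p : ℝ × (Fin d → ℝ) => u p.1 p.2)
    (hρ : ContDiff ℝ (⊤ : ℕ∞) fun p : ℝ × (Fin d → ℝ) => ρ p.1 p.2)
    (hφ : ContDiff ℝ (⊤ : ℕ∞) fun p : ℝ × (Fin d → ℝ) => φ p.1 p.2)
    (hu_per : ∀ t x (m : Fin d → ℤ), u t (x + fun i => (m i : ℝ)) = u t x)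
    (hρ_per : ∀ t x (m : Fin d → ℤ), ρ t (x + fun i => (m i : ℝ)) = ρ t x)
    (hφ_per : ∀ t x (m : Fin d → ℤ), φ t (x + fun i => (m i : ℝ)) = φ t x)
    (hu_K : ∀ t, Real.sqrt (∫ x in unitCube d, ∑ i, (u t x i) ^ 2) ≤ K)
    (hdiv : ∀ t x, ∑ i, fderiv ℝ (u t) x (Pi.single i 1) i = 0)
    (hPDE : ∀ t x, deriv (fun s => ρ s x) t
      + ∑ i, fderiv ℝ (fun y => u t y i * ρ t y) x (Pi.single i 1) = 0)
    (hρ0_avg : ∫ x in unitCube d, ρ 0 x = 0)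
    (hρ0_bdd : ∀ x, |ρ 0 x| ≤ R)
    (hφ_avg : ∀ t, ∫ x in unitCube d, φ t x = 0)
    (hpoisson : ∀ t x,
      ∑ i, fderiv ℝ (fun y => fderiv ℝ (φ t) y (Pi.single i 1)) x (Pi.single i 1) = ρ t x) :
    ∀ t ≥ (0:ℝ),
      Real.sqrt (∫ x in unitCube d, ∑ i, (fderiv ℝ (φ 0) x (Pi.single i 1)) ^ 2)
          - K * R * t
        ≤ Real.sqrt (∫ x in unitCube d, ∑ i, (fderiv ℝ (φ t) x (Pi.single i 1)) ^ 2) := by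
  
  have R0 : 0 ≤ R := le_trans (abs_nonneg _) (hρ0_bdd 0)
  have K0 : 0 ≤ K := le_trans (Real.sqrt_nonneg _) (hu_K 0)
  intro t ht
  cases d with
  | zero =>
      simp only [Finset.univ_eq_empty, Finset.sum_empty, integral_zero, Real.sqrt_zero]
      nlinarith [mul_nonneg (mul_nonneg K0 R0) ht]
  | succ n =>
      have hu_K' : ∀ s, Real.sqrt (∫ x in Set.Icc (0 : Fin (n+1) → ℝ) 1,
          ∑ i, (u s x i) ^ 2) ≤ K := by
        intro s
        rw [show (volume : MeasureTheory.Measure (Fin (n+1) → ℝ)).restrict (Set.Icc 0 1)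
          = volume.restrict (unitCube (n+1)) from (MixAux.restrict_unitCube (n+1)).symm]
        exact hu_K s
      have key := MixAux.main_aux n K R u ρ φ hu hρ hφ hu_per hρ_per hφ_per hu_K'
        hdiv hPDE hρ0_bdd hpoisson t ht
      rw [show (volume : MeasureTheory.Measure (Fin (n+1) → ℝ)).restrict (unitCube (n+1))
        = volume.restrict (Set.Icc 0 1) from MixAux.restrict_unitCube (n+1)]
      exact key
end

section
/- Let Φ : 𝕋² → 𝕋² be measure-preserving, let A, A' ⊂ 𝕋² be the left and right halves of the torus, and suppose that for some ε > 0 and κ ∈ (0,1): for every x ∈ A, |B(ε, Φ(x)) ∩ Φ(A')| ≥ κ|B(ε, Φ(x))|. Suppose also there is H ⊂ 𝕋² with |H| ≤ η and Φ^{-1} restricted to 𝕋² \ H is M-Lipschitz, where (5²/κ)η + η < 1/6. Then ε ≥ 1/(6M). -/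
open MeasureTheory

/-- The two-dimensional unit torus. -/
abbrev Torus2 := AddCircle (1:ℝ) × AddCircle (1:ℝ)

/-- The left half `A = [0,1/2) × [0,1)` of the torus. -/
noncomputable def leftHalf : Set Torus2 :=
  {p : Torus2 | ∃ x ∈ Set.Ico (0:ℝ) (1/2), ∃ y ∈ Set.Ico (0:ℝ) 1,
    p = ((x : AddCircle (1:ℝ)), (y : AddCircle (1:ℝ)))}

/-- The right half `A' = [1/2,1) × [0,1)` of the torus. -/
noncomputable def rightHalf : Set Torus2 :=
  {p : Torus2 | ∃ x ∈ Set.Ico (1/2:ℝ) 1, ∃ y ∈ Set.Ico (0:ℝ) 1,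
    p = ((x : AddCircle (1:ℝ)), (y : AddCircle (1:ℝ)))}

/-!
By a Vitali covering argument, the points at which `H` has density at least `κ` at scale `ε`
form a set `D` of measure at most `(5²/κ)|H|`. Hence the strip `1/6 ≤ x₁ ≤ 1/3`, which has
measure `1/6`, lies in `A` and is `1/6`-separated from `A'`, contains a point `x̄` with
`Φ x̄ ∉ D ∪ H`. Since `Φ(A')` has density at least `κ` in `B(ε, Φ x̄)` while `H` has less, some
`z = Φ w` with `w ∈ A'` lies in `B(ε, Φ x̄) \ H`, and the Lipschitz bound for `Ψ = Φ⁻¹` off `H`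
gives `1/6 ≤ dist x̄ w ≤ M ε`.
-/

open Metric Set ENNReal

theorem nonempty_diff_of_measure_inter_lt {α : Type*} [MeasurableSpace α] {μ : Measure α}
    {s t : Set α} (h : μ (s ∩ t) < μ s) : (s \ t).Nonempty := by
  rw [← sdiff_self_inter]
  exact nonempty_of_measure_ne_zero ((tsub_pos_of_lt h).trans_le le_measure_sdiff).ne'

theorem add_lt_ofReal_of_ofReal_mul_le {d h : ℝ≥0∞} {κ η C s : ℝ} (hκ : 0 < κ) (hC : 0 ≤ C)
    (hs₀ : 0 < s) (hd : ENNReal.ofReal κ * d ≤ ENNReal.ofReal C * h) (hh : h ≤ ENNReal.ofReal η)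
    (hs : C / κ * η + η < s) : d + h < ENNReal.ofReal s := by
  have hd' : d ≤ ENNReal.ofReal (C / κ) * h := by
    rw [ENNReal.ofReal_div_of_pos hκ, mul_comm, ← mul_div_assoc, ENNReal.le_div_iff_mul_le
      (.inl (ENNReal.ofReal_pos.2 hκ).ne') (.inl ofReal_ne_top), mul_comm, mul_comm h]
    exact hd
  calc d + h ≤ (ENNReal.ofReal (C / κ) + 1) * h := by rw [add_one_mul]; gcongr
    _ ≤ (ENNReal.ofReal (C / κ) + 1) * ENNReal.ofReal η := by gcongr
    _ = ENNReal.ofReal ((C / κ + 1) * η) := by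
        rw [ENNReal.ofReal_mul (by positivity), ENNReal.ofReal_add (by positivity) zero_le_one,
          ENNReal.ofReal_one]
    _ < ENNReal.ofReal s := (ENNReal.ofReal_lt_ofReal_iff hs₀).2 (by linarith)

theorem mul_measure_setOf_le_measure_ball_inter_le {X : Type*} [PseudoMetricSpace X]
    [MeasurableSpace X] [OpensMeasurableSpace X] {μ : Measure X} [SFinite μ]
    [μ.IsOpenPosMeasure] {r τ : ℝ} {c C : ℝ≥0∞} (hr : 0 < r) (hτ : 3 < τ) (hc : c ≠ 0)
    (hdoubling : ∀ x, μ (closedBall x (τ * r)) ≤ C * μ (ball x r)) (H : Set X) :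
    c * μ {y | c * μ (ball y r) ≤ μ (ball y r ∩ H)} ≤ C * μ H := by
  set D := {y | c * μ (ball y r) ≤ μ (ball y r ∩ H)}
  obtain ⟨u, huD, hdisj, hcover⟩ :=
    Vitali.exists_disjoint_subfamily_covering_enlargement_closedBall D id (fun _ => r) r
      (fun _ _ => le_rfl) τ hτ
  have hdisj_ball : u.PairwiseDisjoint (ball · r) :=
    hdisj.mono fun _ => ball_subset_closedBall
  have hpos : ∀ y ∈ u, 0 < μ.restrict H (ball y r) := fun y hy => by
    rw [Measure.restrict_apply measurableSet_ball]
    exact (ENNReal.mul_pos hc (measure_ball_pos μ y hr).ne').trans_le (huD hy)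
  -- The balls of `u` are disjoint and each carries positive `μ.restrict H`-mass.
  have hu : u.Countable := by
    have := Measure.countable_meas_pos_of_disjoint_iUnion (μ := μ.restrict H)
      (As := fun y : u => ball (y : X) r) (fun _ => measurableSet_ball)
      (fun y z hyz => hdisj_ball y.2 z.2 (Subtype.coe_injective.ne hyz))
    exact countable_coe_iff.1 (countable_univ_iff.1 (this.mono fun y _ => hpos y y.2))
  calc c * μ D ≤ c * μ (⋃ y ∈ u, closedBall y (τ * r)) := by
        gcongr
        intro y hy
        obtain ⟨b, hb, hsub⟩ := hcover y hy
        exact mem_biUnion hb (hsub (mem_closedBall_self hr.le))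
    _ ≤ c * ∑' y : u, μ (closedBall (y : X) (τ * r)) := by
        gcongr
        exact measure_biUnion_le μ hu _
    _ ≤ ∑' y : u, C * (c * μ (ball (y : X) r)) := by
        rw [← ENNReal.tsum_mul_left]
        refine ENNReal.tsum_le_tsum fun y => ?_
        calc c * μ (closedBall (y : X) (τ * r)) ≤ c * (C * μ (ball y r)) := by
              gcongr; exact hdoubling y
          _ = C * (c * μ (ball (y : X) r)) := by ring
    _ ≤ ∑' y : u, C * μ.restrict H (ball (y : X) r) := by
        refine ENNReal.tsum_le_tsum fun y => ?_
        rw [Measure.restrict_apply measurableSet_ball]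
        gcongr
        exact huD y.2
    _ = C * μ.restrict H (⋃ y ∈ u, ball y r) := by
        rw [ENNReal.tsum_mul_left, measure_biUnion hu hdisj_ball fun _ _ => measurableSet_ball]
    _ ≤ C * μ H :=
        mul_le_mul_right ((measure_mono (subset_univ _)).trans_eq (Measure.restrict_apply_univ H)) C

theorem AddCircle.exists_coe_eq_of_mem_closedBall {p x ε : ℝ} {θ : AddCircle p}
    (hθ : θ ∈ closedBall (x : AddCircle p) ε) : ∃ a ∈ closedBall x ε, (a : AddCircle p) = θ := by
  obtain ⟨t, rfl⟩ := QuotientAddGroup.mk_surjective θ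
  have ht : t ∈ ((↑) : ℝ → AddCircle p) ⁻¹' closedBall (x : AddCircle p) ε := hθ
  rw [coe_real_preimage_closedBall_eq_iUnion] at ht
  obtain ⟨z, hz⟩ := mem_iUnion.1 ht
  refine ⟨t - z • p, ?_, ?_⟩
  · rw [mem_closedBall, dist_eq_norm] at hz ⊢
    rwa [sub_sub, add_comm]
  · rw [QuotientAddGroup.mk_sub, QuotientAddGroup.mk_zsmul, AddCircle.coe_period, smul_zero,
      sub_zero]

theorem UnitAddCircle.le_norm_coe_of_mem_Icc {δ s : ℝ} (hs : s ∈ Icc δ (1 - δ)) :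
    δ ≤ ‖(s : UnitAddCircle)‖ := by
  rw [UnitAddCircle.norm_eq]
  by_contra! h
  obtain ⟨h₁, h₂⟩ := abs_lt.1 h
  have : (0 : ℝ) < round s := by linarith [hs.1]
  have : (round s : ℝ) < 1 := by linarith [hs.2]
  norm_cast at *
  omega

theorem AddCircle.volume_closedBall_mul_le {T : ℝ} [Fact (0 < T)] (x : AddCircle T) {k : ℝ}
    (hk : 1 ≤ k) (r : ℝ) :
    volume (closedBall x (k * r)) ≤ ENNReal.ofReal k * volume (closedBall x r) := by
  rw [volume_closedBall, volume_closedBall, ← ENNReal.ofReal_mul (by linarith),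
    mul_min_of_nonneg _ _ (by linarith)]
  exact ENNReal.ofReal_le_ofReal (min_le_min
    (le_mul_of_one_le_left (Fact.out : 0 < T).le hk) (by linarith))

theorem AddCircle.volume_closedBall_prod_mul_le {T T' : ℝ} [Fact (0 < T)] [Fact (0 < T')]
    (x : AddCircle T × AddCircle T') {k : ℝ} (hk : 1 ≤ k) (r : ℝ) :
    volume (closedBall x (k * r)) ≤ ENNReal.ofReal (k ^ 2) * volume (closedBall x r) := by
  obtain ⟨x₁, x₂⟩ := x
  rw [← closedBall_prod_same, ← closedBall_prod_same, Measure.volume_eq_prod, Measure.prod_prod,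
    Measure.prod_prod, ENNReal.ofReal_pow (by linarith), pow_two, mul_mul_mul_comm]
  gcongr <;> exact AddCircle.volume_closedBall_mul_le _ hk r

/-- Vitali needs an enlargement factor `τ > 3`; taking `τ = 4` and writing `4 r = 5 (4 r / 5)`
with `4 r / 5 < r` gives the constant `5²`. -/
theorem Torus2.volume_closedBall_four_mul_le (x : Torus2) {r : ℝ} (hr : 0 < r) :
    volume (closedBall x (4 * r)) ≤ ENNReal.ofReal (5 ^ 2) * volume (ball x r) := by
  calc volume (closedBall x (4 * r)) = volume (closedBall x (5 * (4 / 5 * r))) := by ring_nf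
    _ ≤ ENNReal.ofReal (5 ^ 2) * volume (closedBall x (4 / 5 * r)) :=
        AddCircle.volume_closedBall_prod_mul_le x (by norm_num) _
    _ ≤ ENNReal.ofReal (5 ^ 2) * volume (ball x r) := by
        gcongr
        exact closedBall_subset_ball (by linarith)

noncomputable def centralStrip : Set Torus2 :=
  closedBall ((1 / 4 : ℝ) : AddCircle (1 : ℝ)) (1 / 12) ×ˢ univ

theorem volume_centralStrip : volume centralStrip = ENNReal.ofReal (1 / 6) := by
  rw [centralStrip, Measure.volume_eq_prod, Measure.prod_prod, AddCircle.volume_closedBall,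
    AddCircle.measure_univ]
  norm_num

theorem exists_coe_eq_of_mem_centralStrip {x : Torus2} (hx : x ∈ centralStrip) :
    ∃ a ∈ Icc (1 / 6 : ℝ) (1 / 3), (a : AddCircle (1 : ℝ)) = x.1 := by
  obtain ⟨a, ha, hax⟩ := AddCircle.exists_coe_eq_of_mem_closedBall hx.1
  rw [Real.closedBall_eq_Icc] at ha
  exact ⟨a, by convert ha using 2 <;> norm_num, hax⟩

theorem centralStrip_subset_leftHalf : centralStrip ⊆ leftHalf := by
  intro x hx
  obtain ⟨a, ha, hax⟩ := exists_coe_eq_of_mem_centralStrip hx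
  obtain ⟨b, hb, hbx⟩ := AddCircle.eq_coe_Ico x.2
  exact ⟨a, ⟨by linarith [ha.1], by linarith [ha.2]⟩, b, hb, by rw [hax, hbx]⟩

theorem le_dist_of_mem_centralStrip_of_mem_rightHalf {x w : Torus2} (hx : x ∈ centralStrip)
    (hw : w ∈ rightHalf) : 1 / 6 ≤ dist x w := by
  obtain ⟨a, ha, hax⟩ := exists_coe_eq_of_mem_centralStrip hx
  obtain ⟨b, hb, y, -, rfl⟩ := hw
  calc (1 / 6 : ℝ) ≤ ‖((b - a : ℝ) : UnitAddCircle)‖ :=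
        UnitAddCircle.le_norm_coe_of_mem_Icc ⟨by linarith [ha.2, hb.1], by linarith [ha.1, hb.2]⟩
    _ = dist x.1 (b : AddCircle (1 : ℝ)) := by
        rw [← hax, dist_eq_norm, norm_sub_rev, QuotientAddGroup.mk_sub]
    _ ≤ dist x _ := by rw [Prod.dist_eq]; exact le_max_left _ _

theorem geometric_mixing_lower_bound_general (Φ Ψ : Torus2 → Torus2) (ε κ η M : ℝ)
    (hε : 0 < ε) (hκ : κ ∈ Set.Ioo (0:ℝ) 1)
    (hmp : MeasurePreserving Φ (volume : Measure Torus2) volume)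
    (hΨΦ : ∀ p, Ψ (Φ p) = p)
    (H : Set Torus2) (hH : volume H ≤ ENNReal.ofReal η)
    (hΨ_lip : LipschitzOnWith (Real.toNNReal M) Ψ Hᶜ)
    (hsmall : (5 ^ 2 / κ) * η + η < 1 / 6)
    (hmix : ∀ p ∈ leftHalf, ENNReal.ofReal κ * volume (Metric.ball (Φ p) ε)
      ≤ volume (Metric.ball (Φ p) ε ∩ (Φ '' rightHalf))) :
    1 / (6 * M) ≤ ε := by
  rcases le_or_gt M 0 with hM | hM
  · exact (one_div_nonpos.2 (by linarith)).trans hε.le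
  set D := {y | ENNReal.ofReal κ * volume (ball y ε) ≤ volume (ball y ε ∩ H)}
  have hDH : volume D + volume H < ENNReal.ofReal (1 / 6) :=
    add_lt_ofReal_of_ofReal_mul_le hκ.1 (by positivity) (by norm_num)
      (mul_measure_setOf_le_measure_ball_inter_le hε (by norm_num : (3 : ℝ) < 4)
        (ENNReal.ofReal_pos.2 hκ.1).ne' (fun x => Torus2.volume_closedBall_four_mul_le x hε) H)
      hH hsmall
  obtain ⟨x, hx, hxDH⟩ : (centralStrip \ Φ ⁻¹' (D ∪ H)).Nonempty := by
    refine nonempty_diff_of_measure_inter_lt (μ := volume) ?_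
    calc volume (centralStrip ∩ Φ ⁻¹' (D ∪ H)) ≤ volume (D ∪ H) :=
          (measure_mono inter_subset_right).trans (hmp.measure_preimage_le _)
      _ < volume centralStrip := by
          rw [volume_centralStrip]; exact (measure_union_le D H).trans_lt hDH
  obtain ⟨z, ⟨hz, w, hw, rfl⟩, hzH⟩ : ((ball (Φ x) ε ∩ Φ '' rightHalf) \ H).Nonempty := by
    refine nonempty_diff_of_measure_inter_lt (μ := volume) ?_
    calc volume (ball (Φ x) ε ∩ Φ '' rightHalf ∩ H) ≤ volume (ball (Φ x) ε ∩ H) :=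
          measure_mono (inter_subset_inter_left _ inter_subset_left)
      _ < ENNReal.ofReal κ * volume (ball (Φ x) ε) := not_le.1 fun h => hxDH (.inl h)
      _ ≤ _ := hmix x (centralStrip_subset_leftHalf hx)
  have hsep := le_dist_of_mem_centralStrip_of_mem_rightHalf hx hw
  have hlip := hΨ_lip.dist_le_mul (Φ x) (fun h => hxDH (.inr h)) (Φ w) hzH
  rw [hΨΦ, hΨΦ, Real.coe_toNNReal M hM.le] at hlip
  rw [div_le_iff₀ (by positivity)]
  nlinarith [mem_ball'.1 hz]

/-- Geometric mixing lower bound from Lusin–Lipschitz regularity of the inverse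
flow: if `Φ` is measure preserving, every ball `B(Φ(x),ε)`, `x ∈ A`, contains a
`κ`-fraction of `Φ(A')`, and the inverse `Ψ = Φ⁻¹` is `M`-Lipschitz off an
exceptional set `H` of measure at most `η` with `(5²/κ)η + η < 1/6`, then
`ε ≥ 1/(6M)`. -/
theorem geometric_mixing_lower_bound (Φ Ψ : Torus2 → Torus2) (ε κ η M : ℝ)
    (hε : 0 < ε) (hκ : κ ∈ Set.Ioo (0:ℝ) 1) (hM : 0 < M)
    (hmp : MeasurePreserving Φ (volume : Measure Torus2) volume)
    (hΨΦ : ∀ p, Ψ (Φ p) = p) (hΦΨ : ∀ p, Φ (Ψ p) = p)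
    (H : Set Torus2) (hHm : MeasurableSet H) (hH : volume H ≤ ENNReal.ofReal η)
    (hΨ_lip : LipschitzOnWith (Real.toNNReal M) Ψ Hᶜ)
    (hsmall : (5 ^ 2 / κ) * η + η < 1 / 6)
    (hmix : ∀ p ∈ leftHalf, ENNReal.ofReal κ * volume (Metric.ball (Φ p) ε)
      ≤ volume (Metric.ball (Φ p) ε ∩ (Φ '' rightHalf))) :
    1 / (6 * M) ≤ ε :=
  geometric_mixing_lower_bound_general Φ Ψ ε κ η M hε hκ hmp hΨΦ H hH hΨ_lip hsmall hmix
end
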